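/- Let m > n ≥ 2 be integers with log(m)/log(n) irrational. Then exactly one of the following holds: (1) 1/n is m-far; (2) there exist positive integers a, b such that (m^a, n^b) is a good pair. -/

import Mathlib

/-- A real number `δ` is `m`-far if there exists `C > 0` such that
`|δ - k/m^s| ≥ C/m^s` for all integers `s ≥ 0` and `k ∈ ℤ`. -/
def IsNFar (m : ℕ) (δ : ℝ) : Prop :=
  ∃ C : ℝ, 0 < C ∧ ∀ (s : ℕ) (k : ℤ), C / (m : ℝ) ^ s ≤ |δ - (k : ℝ) / (m : ℝ) ^ s|

/-- `(M, N)` is a good pair: `M > N`, every prime dividing `N` divides `M`, the exponent of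
each prime in `M` is at least its exponent in `N`, and some prime appears with equal
positive exponent in both. -/
def GoodPair (M N : ℕ) : Prop :=
  N < M ∧ (∀ p : ℕ, p.Prime → p ∣ N → p ∣ M) ∧
    (∀ p : ℕ, p.Prime → N.factorization p ≤ M.factorization p) ∧
    (∃ p : ℕ, p.Prime ∧ 0 < N.factorization p ∧ N.factorization p = M.factorization p)

/-- For integers `m > n ≥ 2` with `log m / log n` irrational, exactly one of the following
holds: `1/n` is `m`-far, or `(m^a, n^b)` is a good pair for some positive integers `a, b`. -/
theorem stmt10 (m n : ℕ) (hn : 2 ≤ n) (hmn : n < m)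
    (hirr : Irrational (Real.log m / Real.log n)) :
    Xor' (IsNFar m (1 / (n : ℝ)))
      (∃ a b : ℕ, 0 < a ∧ 0 < b ∧ GoodPair (m ^ a) (n ^ b)) := by
  have hn0 : n ≠ 0 := by omega
  have hm0 : m ≠ 0 := by omega
  by_cases hP : ∀ q : ℕ, q.Prime → q ∣ n → q ∣ m
  · right
    constructor
    · -- build the good pair
      obtain ⟨p, hp_mem, hp_max⟩ := n.primeFactors.exists_max_image
        (fun q => (n.factorization q : ℚ) / (m.factorization q : ℚ))
        (Nat.nonempty_primeFactors.2 (by omega))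
      have hp_prime : p.Prime := Nat.prime_of_mem_primeFactors hp_mem
      have hpn : p ∣ n := Nat.dvd_of_mem_primeFactors hp_mem
      have hpm : p ∣ m := hP p hp_prime hpn
      set a := n.factorization p with ha_def
      set b := m.factorization p with hb_def
      have ha : 0 < a := hp_prime.factorization_pos_of_dvd hn0 hpn
      have hb : 0 < b := hp_prime.factorization_pos_of_dvd hm0 hpm
      have key : ∀ q : ℕ, b * n.factorization q ≤ a * m.factorization q := by
        intro q
        by_cases hq : q ∈ n.primeFactors
        · have hq_prime : q.Prime := Nat.prime_of_mem_primeFactors hq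
          have hqm : q ∣ m := hP q hq_prime (Nat.dvd_of_mem_primeFactors hq)
          have hqm' : 0 < m.factorization q := hq_prime.factorization_pos_of_dvd hm0 hqm
          have := hp_max q hq
          rw [div_le_div_iff₀ (by exact_mod_cast hqm') (by exact_mod_cast hb)] at this
          have h2 : n.factorization q * b ≤ a * m.factorization q := by exact_mod_cast this
          rw [mul_comm]
          exact h2
        · have : n.factorization q = 0 := by
            rw [← Finsupp.notMem_support_iff, Nat.support_factorization]; exact hq
          simp [this]
      have hfac : (n ^ b).factorization ≤ (m ^ a).factorization := by
        rw [Finsupp.le_def]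
        intro q
        rw [Nat.factorization_pow, Nat.factorization_pow]
        simpa using key q
      have hdvd : n ^ b ∣ m ^ a :=
        (Nat.factorization_le_iff_dvd (pow_ne_zero _ hn0) (pow_ne_zero _ hm0)).1 hfac
      have hne : n ^ b ≠ m ^ a := by
        intro heq
        have hlogn : (0:ℝ) < Real.log n := Real.log_pos (by exact_mod_cast hn)
        have hlog : (b : ℝ) * Real.log n = (a : ℝ) * Real.log m := by
          have : ((n : ℝ)) ^ b = (m : ℝ) ^ a := by exact_mod_cast heq
          calc (b : ℝ) * Real.log n = Real.log ((n:ℝ) ^ b) := (Real.log_pow (n:ℝ) b).symm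
            _ = Real.log ((m:ℝ) ^ a) := by rw [this]
            _ = (a : ℝ) * Real.log m := Real.log_pow (m:ℝ) a
        apply hirr
        refine ⟨(b : ℚ) / (a : ℚ), ?_⟩
        have ha' : (a : ℝ) ≠ 0 := by exact_mod_cast ha.ne'
        push_cast
        rw [div_eq_div_iff ha' hlogn.ne']
        linarith [hlog]
      refine ⟨a, b, ha, hb, ?_, ?_, ?_, ?_⟩
      · exact lt_of_le_of_ne (Nat.le_of_dvd (pow_pos (by omega) a) hdvd) hne
      · intro q hq hqnb
        exact dvd_pow (hP q hq (hq.dvd_of_dvd_pow hqnb)) ha.ne'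
      · intro q _
        exact Finsupp.le_def.1 hfac q
      · refine ⟨p, hp_prime, ?_, ?_⟩
        · rw [Nat.factorization_pow]
          simp only [Finsupp.smul_apply, smul_eq_mul]
          exact Nat.mul_pos hb ha
        · rw [Nat.factorization_pow, Nat.factorization_pow]
          simp only [Finsupp.smul_apply, smul_eq_mul]
          rw [← ha_def, ← hb_def, mul_comm]
    · -- not m-far
      rintro ⟨C, hC, h⟩
      have hdvd : n ∣ m ^ n := by
        rw [← Nat.factorization_le_iff_dvd hn0 (pow_ne_zero n hm0), Finsupp.le_def]
        intro q
        rw [Nat.factorization_pow]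
        simp only [Finsupp.smul_apply, smul_eq_mul]
        by_cases hq : q ∈ n.primeFactors
        · have hq_prime : q.Prime := Nat.prime_of_mem_primeFactors hq
          have hqm : 0 < m.factorization q :=
            hq_prime.factorization_pos_of_dvd hm0 (hP q hq_prime (Nat.dvd_of_mem_primeFactors hq))
          have := Nat.factorization_lt q hn0
          calc n.factorization q ≤ n := this.le
            _ = n * 1 := (mul_one n).symm
            _ ≤ n * m.factorization q := Nat.mul_le_mul_left n hqm
        · have : n.factorization q = 0 := by
            rw [← Finsupp.notMem_support_iff, Nat.support_factorization]; exact hq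
          simp [this]
      obtain ⟨k, hk⟩ := hdvd
      have hk0 : k ≠ 0 := by rintro rfl; simp at hk; omega
      have := h n (k : ℤ)
      have heq : (1 : ℝ) / n - (k : ℝ) / (m : ℝ) ^ n = 0 := by
        have hmr : ((m : ℝ)) ^ n = (n : ℝ) * k := by exact_mod_cast hk
        rw [hmr]
        have hnr : (n : ℝ) ≠ 0 := by exact_mod_cast hn0
        have hkr : (k : ℝ) ≠ 0 := by exact_mod_cast hk0
        field_simp
        ring
      rw [show ((k : ℤ) : ℝ) = (k : ℝ) by push_cast; ring, heq, abs_zero] at this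
      have : (0:ℝ) < C / (m : ℝ) ^ n := by positivity
      linarith
  · left
    push_neg at hP
    obtain ⟨q, hq_prime, hqn, hqm⟩ := hP
    constructor
    · refine ⟨1 / n, by positivity, ?_⟩
      intro s k
      have hnr : (0:ℝ) < (n : ℝ) := by exact_mod_cast (by omega : 0 < n)
      have hmr : (0:ℝ) < (m : ℝ) ^ s := by positivity
      have hint : ((m : ℤ)) ^ s - k * n ≠ 0 := by
        intro h0
        have hdvd : (n : ℤ) ∣ (m : ℤ) ^ s := ⟨k, by linarith⟩
        have : n ∣ m ^ s := by exact_mod_cast hdvd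
        exact hqm (hq_prime.dvd_of_dvd_pow (hqn.trans this))
      have h1 : (1:ℝ) ≤ |(m : ℝ) ^ s - (k : ℝ) * n| := by
        exact_mod_cast Int.one_le_abs hint
      have heq : (1:ℝ) / n - (k : ℝ) / (m : ℝ) ^ s
          = ((m : ℝ) ^ s - (k : ℝ) * n) / ((n : ℝ) * (m : ℝ) ^ s) := by
        field_simp
      rw [heq, abs_div, abs_of_pos (by positivity : (0:ℝ) < (n : ℝ) * (m : ℝ) ^ s),
        div_div]
      gcongr
    · rintro ⟨a, b, ha, hb, _, hprimes, _, _⟩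
      exact hqm (hq_prime.dvd_of_dvd_pow
        (hprimes q hq_prime (dvd_pow hqn hb.ne')))
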